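/- arXiv:1901.01357 — 2 statements merged into one kernel-verified Lean document; each statement's English description precedes it below -/
import Mathlib

section
/- Let φ : ℝ³ → ℂ be smooth with |φ(p)| < 1 for all p, and let θ¹, θ₁¹, τ¹ be the explicit coframe, connection form and torsion form built from φ. Then the Webster structure equations hold on all of ℝ³: (i) dθ¹ = θ¹ ∧ θ₁¹ + Θ ∧ τ¹ (an identity of complex-valued 2-forms, where the exterior derivative and wedge are as defined below); (ii) θ₁¹ + conj(θ₁¹) = 0, where conj(θ₁¹) is the pointwise complex conjugate 1-form; (iii) τ₁ ∧ θ¹ = 0, where τ₁ = conj(τ¹). (Proposition 3.1 of the paper: the explicit forms are the pseudohermitian connection and torsion forms of the CR structure with deformation tensor φ on the Heisenberg group.) -/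
noncomputable section

open Complex

/-- Points of the Heisenberg group `H₁ = ℝ³`, coordinates `p = (x, y, z)`. -/
abbrev H1 : Type := ℝ × ℝ × ℝ

/-- The left-invariant vector field `e̊₁ = ∂/∂x + y ∂/∂z` at `p = (x,y,z)`. -/
def ee1 (p : H1) : H1 := (1, 0, p.2.1)

/-- The left-invariant vector field `e̊₂ = ∂/∂y − x ∂/∂z` at `p = (x,y,z)`. -/
def ee2 (p : H1) : H1 := (0, 1, -p.1)

/-- The left-invariant vector field `T = ∂/∂z`. -/
def Tvec (_ : H1) : H1 := (0, 0, 1)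

/-- The standard contact form `Θ = dz + x dy − y dx`: `Θ_p(u) = u₃ + x u₂ − y u₁`. -/
def Theta (p u : H1) : ℝ := u.2.2 + p.1 * u.2.1 - p.2.1 * u.1

/-- `Θ` viewed as a complex-valued 1-form. -/
def ThetaC (p u : H1) : ℂ := (Theta p u : ℂ)

/-- `Z̊₁ f = ½(e̊₁f − i e̊₂f)`, acting on smooth complex-valued functions via the
real Fréchet derivative. -/
def Z1 (f : H1 → ℂ) (p : H1) : ℂ :=
  (1 / 2) * (fderiv ℝ f p (ee1 p) - Complex.I * fderiv ℝ f p (ee2 p))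

/-- `Z̊_{1̄} f = ½(e̊₁f + i e̊₂f)`. -/
def Z1b (f : H1 → ℂ) (p : H1) : ℂ :=
  (1 / 2) * (fderiv ℝ f p (ee1 p) + Complex.I * fderiv ℝ f p (ee2 p))

/-- `Tf = ∂f/∂z`. -/
def Tder (f : H1 → ℂ) (p : H1) : ℂ := fderiv ℝ f p (Tvec p)

/-- The standard coframe `θ̊¹ = dx + i dy`. -/
def th01 (_ : H1) (u : H1) : ℂ := (u.1 : ℂ) + Complex.I * u.2.1

/-- The standard coframe `θ̊^{1̄} = dx − i dy`. -/
def th01b (_ : H1) (u : H1) : ℂ := (u.1 : ℂ) - Complex.I * u.2.1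

/-- Wedge of complex-valued 1-forms: `(α∧β)_p(u,v) = α_p(u)β_p(v) − α_p(v)β_p(u)`. -/
def wedge (α β : H1 → H1 → ℂ) (p u v : H1) : ℂ := α p u * β p v - α p v * β p u

/-- Exterior derivative of a complex-valued 1-form:
`dω_p(u,v) = (Dω_p(u))(v) − (Dω_p(v))(u)`. -/
def extD (ω : H1 → H1 → ℂ) (p u v : H1) : ℂ :=
  fderiv ℝ (fun q => ω q v) p u - fderiv ℝ (fun q => ω q u) p v

/-- `φ̄`, the pointwise complex conjugate of `φ`. -/
def cconj (φ : H1 → ℂ) : H1 → ℂ := fun p => (starRingEnd ℂ) (φ p)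

/-- `F = (1 − |φ|²)^{−1/2}`. -/
def Ff (φ : H1 → ℂ) (p : H1) : ℝ := (Real.sqrt (1 - ‖φ p‖ ^ 2))⁻¹

/-- The function `(1 − |φ|²)^{−1}` viewed as complex-valued. -/
def invOneSub (φ : H1 → ℂ) : H1 → ℂ := fun p => (((1 - ‖φ p‖ ^ 2)⁻¹ : ℝ) : ℂ)

/-- The coframe `θ¹ = F(θ̊¹ − φ θ̊^{1̄})`. -/
def th1 (φ : H1 → ℂ) (p u : H1) : ℂ := (Ff φ p : ℂ) * (th01 p u - φ p * th01b p u)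

/-- The coframe `θ^{1̄} = F(θ̊^{1̄} − φ̄ θ̊¹)`. -/
def th1bar (φ : H1 → ℂ) (p u : H1) : ℂ :=
  (Ff φ p : ℂ) * (th01b p u - (starRingEnd ℂ) (φ p) * th01 p u)

/-- The torsion coefficient `A^1_{1̄} = −φ₀/(1 − |φ|²)`. -/
def A11b (φ : H1 → ℂ) (p : H1) : ℂ := -Tder φ p * invOneSub φ p

/-- The torsion form `τ¹ = A^1_{1̄} θ^{1̄}`. -/
def tau1 (φ : H1 → ℂ) (p u : H1) : ℂ := A11b φ p * th1bar φ p u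

/-- The `θ̊¹`-coefficient of the connection form:
`(φ̄_{1̄} + φ̄φ₁)/(1−|φ|²) + φ̄·Z̊_{1̄}((1−|φ|²)⁻¹) + Z̊₁((1−|φ|²)⁻¹)`. -/
def connC1 (φ : H1 → ℂ) (p : H1) : ℂ :=
  (Z1b (cconj φ) p + (starRingEnd ℂ) (φ p) * Z1 φ p) * invOneSub φ p +
    (starRingEnd ℂ) (φ p) * Z1b (invOneSub φ) p + Z1 (invOneSub φ) p

/-- The (negative of the) `θ̊^{1̄}`-coefficient of the connection form:
`(φ₁ + φφ̄_{1̄})/(1−|φ|²) + |φ|²·Z̊_{1̄}((1−|φ|²)⁻¹) + φ·Z̊₁((1−|φ|²)⁻¹)`. -/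
def connC2 (φ : H1 → ℂ) (p : H1) : ℂ :=
  (Z1 φ p + φ p * Z1b (cconj φ) p) * invOneSub φ p +
    ((‖φ p‖ ^ 2 : ℝ) : ℂ) * Z1b (invOneSub φ) p + φ p * Z1 (invOneSub φ) p

/-- The pseudohermitian connection form
`θ₁¹ = −d(ln F) + [φ̄φ₀/(1−|φ|²)] Θ + connC1 · θ̊¹ − connC2 · θ̊^{1̄}`. -/
def conn (φ : H1 → ℂ) (p u : H1) : ℂ :=
  -((fderiv ℝ (fun q => Real.log (Ff φ q)) p u : ℝ) : ℂ) +
    ((starRingEnd ℂ) (φ p) * Tder φ p * invOneSub φ p) * ThetaC p u +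
    connC1 φ p * th01 p u - connC2 φ p * th01b p u

section Aux

/-- decomposition of a tangent vector in the moving frame -/
lemma decomp (p u : H1) : u = u.1 • ee1 p + u.2.1 • ee2 p + Theta p u • Tvec p := by
  simp only [ee1, ee2, Tvec, Theta, Prod.ext_iff, Prod.smul_mk, smul_eq_mul, Prod.fst_add,
    Prod.snd_add, Prod.mk_add_mk]
  refine ⟨by ring, by ring, by ring⟩

lemma coframe (f : H1 → ℂ) (p u : H1) :
    fderiv ℝ f p u = Z1 f p * th01 p u + Z1b f p * th01b p u + Tder f p * ThetaC p u := by
  conv_lhs => rw [decomp p u]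
  rw [map_add, map_add, map_smul, map_smul, map_smul]
  simp only [Z1, Z1b, Tder, th01, th01b, ThetaC, real_smul]
  ring_nf
  rw [Complex.I_sq]
  ring

lemma fderiv_conj (f : H1 → ℂ) {p : H1} (hf : DifferentiableAt ℝ f p) (u : H1) :
    fderiv ℝ (cconj f) p u = (starRingEnd ℂ) (fderiv ℝ f p u) := by
  have h : HasFDerivAt (cconj f)
      ((Complex.conjCLE : ℂ ≃L[ℝ] ℂ).toContinuousLinearMap.comp (fderiv ℝ f p)) p :=
    (Complex.conjCLE.hasFDerivAt.comp p hf.hasFDerivAt)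
  rw [h.fderiv]
  rfl

end Aux

section Aux2

lemma conj_Z1 (f : H1 → ℂ) {p : H1} (hf : DifferentiableAt ℝ f p) :
    (starRingEnd ℂ) (Z1 f p) = Z1b (cconj f) p := by
  simp only [Z1, Z1b, map_mul, map_sub, map_add, map_div₀, map_one, map_ofNat,
    Complex.conj_I, fderiv_conj f hf]
  ring

lemma conj_Z1b (f : H1 → ℂ) {p : H1} (hf : DifferentiableAt ℝ f p) :
    (starRingEnd ℂ) (Z1b f p) = Z1 (cconj f) p := by
  simp only [Z1, Z1b, map_mul, map_sub, map_add, map_div₀, map_one, map_ofNat,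
    Complex.conj_I, fderiv_conj f hf]
  ring

lemma conj_Tder (f : H1 → ℂ) {p : H1} (hf : DifferentiableAt ℝ f p) :
    (starRingEnd ℂ) (Tder f p) = Tder (cconj f) p := by
  simp only [Tder, fderiv_conj f hf]

lemma cconj_cconj (f : H1 → ℂ) : cconj (cconj f) = f := by
  funext q; simp [cconj]

lemma cconj_invOneSub (φ : H1 → ℂ) : cconj (invOneSub φ) = invOneSub φ := by
  funext q; simp [cconj, invOneSub]

lemma conj_th01 (p u : H1) : (starRingEnd ℂ) (th01 p u) = th01b p u := by
  simp [th01, th01b]; ring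

lemma conj_th01b (p u : H1) : (starRingEnd ℂ) (th01b p u) = th01 p u := by
  simp [th01, th01b]

lemma conj_ThetaC (p u : H1) : (starRingEnd ℂ) (ThetaC p u) = ThetaC p u := by
  simp [ThetaC]

lemma norm_sq_eq_re (z : ℂ) : (‖z‖ ^ 2 : ℝ) = (z * (starRingEnd ℂ) z).re := by
  rw [Complex.mul_conj, Complex.ofReal_re, Complex.normSq_eq_norm_sq]

lemma normsq_cast (z : ℂ) : ((‖z‖ ^ 2 : ℝ) : ℂ) = z * (starRingEnd ℂ) z := by
  rw [Complex.mul_conj]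
  norm_cast
  rw [Complex.normSq_eq_norm_sq]

end Aux2

section Deriv

variable (φ : H1 → ℂ)

/-- derivative of `q ↦ 1 - ‖φ q‖²`. -/
def DG (p : H1) : H1 →L[ℝ] ℝ :=
  -(Complex.reCLM.comp
      (φ p • ((Complex.conjCLE : ℂ ≃L[ℝ] ℂ).toContinuousLinearMap.comp (fderiv ℝ φ p)) +
        (starRingEnd ℂ) (φ p) • fderiv ℝ φ p))

variable {φ} (hφ : ContDiff ℝ (⊤ : ℕ∞) φ) (hlt : ∀ p, ‖φ p‖ < 1)

include hφ in
lemma hdφ : Differentiable ℝ φ := hφ.differentiable (by simp)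

include hlt in
lemma gpos (p : H1) : 0 < 1 - ‖φ p‖ ^ 2 := by
  have h := hlt p
  have h0 : 0 ≤ ‖φ p‖ := norm_nonneg _
  nlinarith

include hφ in
lemma hg (p : H1) : HasFDerivAt (fun q => 1 - ‖φ q‖ ^ 2) (DG φ p) p := by
  have hc : HasFDerivAt (cconj φ)
      ((Complex.conjCLE : ℂ ≃L[ℝ] ℂ).toContinuousLinearMap.comp (fderiv ℝ φ p)) p :=
    Complex.conjCLE.hasFDerivAt.comp p (hdφ hφ p).hasFDerivAt
  have hmul : HasFDerivAt (fun q => φ q * cconj φ q)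
      (φ p • ((Complex.conjCLE : ℂ ≃L[ℝ] ℂ).toContinuousLinearMap.comp (fderiv ℝ φ p)) +
        (starRingEnd ℂ) (φ p) • fderiv ℝ φ p) p := by
    have := (hdφ hφ p).hasFDerivAt.mul hc
    exact this
  have hre := Complex.reCLM.hasFDerivAt.comp p hmul
  have := hre.const_sub 1
  have heq : (fun x => 1 - (⇑Complex.reCLM ∘ fun q => φ q * cconj φ q) x) =
      fun q => 1 - ‖φ q‖ ^ 2 := by
    funext q
    simp only [Function.comp_apply, Complex.reCLM_apply, cconj]
    rw [← norm_sq_eq_re]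
  rw [heq] at this
  exact this

omit hφ hlt in
lemma DG_cast (p u : H1) : ((DG φ p u : ℝ) : ℂ) =
    -((starRingEnd ℂ) (φ p) * fderiv ℝ φ p u + φ p * (starRingEnd ℂ) (fderiv ℝ φ p u)) := by
  have hx : (DG φ p u : ℝ) =
      -(φ p * (starRingEnd ℂ) (fderiv ℝ φ p u) + (starRingEnd ℂ) (φ p) * fderiv ℝ φ p u).re := by
    simp [DG, Complex.add_re, smul_eq_mul]
  rw [hx]
  push_cast
  have hself : (starRingEnd ℂ)
      (φ p * (starRingEnd ℂ) (fderiv ℝ φ p u) + (starRingEnd ℂ) (φ p) * fderiv ℝ φ p u) =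
      φ p * (starRingEnd ℂ) (fderiv ℝ φ p u) + (starRingEnd ℂ) (φ p) * fderiv ℝ φ p u := by
    simp only [map_add, map_mul, Complex.conj_conj]
    ring
  rw [Complex.conj_eq_iff_re] at hself
  rw [hself]
  ring

include hφ hlt in
lemma hFf (p : H1) : HasFDerivAt (Ff φ)
    ((-(1 / 2) * (1 - ‖φ p‖ ^ 2)⁻¹ * Ff φ p) • DG φ p) p := by
  have hgp := gpos hlt p
  have hs : (0:ℝ) < Real.sqrt (1 - ‖φ p‖ ^ 2) := Real.sqrt_pos.mpr hgp
  have h1 : HasFDerivAt (fun q => Real.sqrt (1 - ‖φ q‖ ^ 2))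
      ((1 / (2 * Real.sqrt (1 - ‖φ p‖ ^ 2))) • DG φ p) p :=
    (Real.hasDerivAt_sqrt hgp.ne').comp_hasFDerivAt p (hg hφ p)
  have h2 := (hasDerivAt_inv hs.ne').comp_hasFDerivAt p h1
  have h3 : HasFDerivAt (Ff φ)
      ((-(Real.sqrt (1 - ‖φ p‖ ^ 2) ^ 2)⁻¹) •
        (1 / (2 * Real.sqrt (1 - ‖φ p‖ ^ 2))) • DG φ p) p := h2
  convert h3 using 1
  rw [smul_smul]
  congr 1
  rw [Real.sq_sqrt hgp.le, Ff]
  field_simp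

include hφ hlt in
lemma hLog (p : H1) : HasFDerivAt (fun q => Real.log (Ff φ q))
    ((-(1 / 2) * (1 - ‖φ p‖ ^ 2)⁻¹) • DG φ p) p := by
  have hgp := gpos hlt p
  have heq : (fun q => Real.log (Ff φ q)) =
      fun q => -(1 / 2 * Real.log (1 - ‖φ q‖ ^ 2)) := by
    funext q
    rw [Ff, Real.log_inv, Real.log_sqrt (gpos hlt q).le]
    ring
  rw [heq]
  have h1 := ((hg hφ p).log hgp.ne').const_mul (1 / 2 : ℝ)
  have h2 : HasFDerivAt (fun q => -(1 / 2 * Real.log (1 - ‖φ q‖ ^ 2))) _ p := h1.neg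
  refine h2.congr_fderiv ?_
  rw [smul_smul]
  module

include hφ hlt in
lemma hInv (p : H1) : HasFDerivAt (invOneSub φ)
    (Complex.ofRealCLM.comp ((-((1 - ‖φ p‖ ^ 2) ^ 2)⁻¹) • DG φ p)) p := by
  have hgp := gpos hlt p
  have h1 := (hasDerivAt_inv hgp.ne').comp_hasFDerivAt p (hg hφ p)
  exact Complex.ofRealCLM.hasFDerivAt.comp p h1

include hφ hlt in
lemma DF_eq (p u : H1) : fderiv ℝ (Ff φ) p u =
    Ff φ p * fderiv ℝ (fun q => Real.log (Ff φ q)) p u := by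
  rw [(hFf hφ hlt p).fderiv, (hLog hφ hlt p).fderiv]
  simp only [ContinuousLinearMap.coe_smul', Pi.smul_apply, smul_eq_mul]
  ring

include hφ hlt in
lemma Dlog_cast (p u : H1) : ((fderiv ℝ (fun q => Real.log (Ff φ q)) p u : ℝ) : ℂ) =
    -(1 / 2) * invOneSub φ p * ((DG φ p u : ℝ) : ℂ) := by
  rw [(hLog hφ hlt p).fderiv]
  simp only [ContinuousLinearMap.coe_smul', Pi.smul_apply, smul_eq_mul, invOneSub]
  push_cast
  ring

include hφ hlt in
lemma DInv_eq (p u : H1) : fderiv ℝ (invOneSub φ) p u =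
    -(invOneSub φ p) ^ 2 * ((DG φ p u : ℝ) : ℂ) := by
  rw [(hInv hφ hlt p).fderiv]
  simp only [ContinuousLinearMap.coe_comp', Function.comp_apply,
    ContinuousLinearMap.coe_smul', Pi.smul_apply, smul_eq_mul, Complex.ofRealCLM_apply,
    invOneSub]
  push_cast
  rw [inv_pow]

include hφ hlt in
lemma fderiv_th1 (p u v : H1) :
    fderiv ℝ (fun q => th1 φ q v) p u =
      ((fderiv ℝ (Ff φ) p u : ℝ) : ℂ) * (th01 p v - φ p * th01b p v) -
        (Ff φ p : ℂ) * (fderiv ℝ φ p u * th01b p v) := by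
  have h1 : HasFDerivAt (fun q => ((Ff φ q : ℝ) : ℂ))
      (Complex.ofRealCLM.comp ((-(1 / 2) * (1 - ‖φ p‖ ^ 2)⁻¹ * Ff φ p) • DG φ p)) p :=
    Complex.ofRealCLM.hasFDerivAt.comp p (hFf hφ hlt p)
  have h2 : HasFDerivAt (fun q => th01 q v - φ q * th01b q v)
      (-(th01b p v • fderiv ℝ φ p)) p := by
    have := ((hdφ hφ p).hasFDerivAt.mul_const (th01b p v)).const_sub (th01 p v)
    exact this
  have h : HasFDerivAt (fun q => ((Ff φ q : ℝ) : ℂ) * (th01 q v - φ q * th01b q v)) _ p :=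
    h1.mul h2
  rw [show (fun q => th1 φ q v) =
      (fun q => ((Ff φ q : ℝ) : ℂ) * (th01 q v - φ q * th01b q v)) from rfl]
  rw [h.fderiv]
  simp only [ContinuousLinearMap.add_apply, ContinuousLinearMap.coe_smul', Pi.smul_apply,
    ContinuousLinearMap.neg_apply, ContinuousLinearMap.coe_comp', Function.comp_apply,
    Complex.ofRealCLM_apply, smul_eq_mul]
  rw [(hFf hφ hlt p).fderiv]
  simp only [ContinuousLinearMap.coe_smul', Pi.smul_apply, smul_eq_mul]
  push_cast
  ring

end Deriv

/-- Proposition 3.1: the explicit forms `θ₁¹` and `τ¹` built from the deformation tensor `φ`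
satisfy the Webster structure equations on all of `ℝ³`:
(i) `dθ¹ = θ¹ ∧ θ₁¹ + Θ ∧ τ¹`; (ii) `θ₁¹ + conj(θ₁¹) = 0`; (iii) `τ₁ ∧ θ¹ = 0` where
`τ₁ = conj(τ¹)`. -/
theorem structure_equations (φ : H1 → ℂ) (hφ : ContDiff ℝ (⊤ : ℕ∞) φ) (hlt : ∀ p, ‖φ p‖ < 1) :
    (∀ p u v : H1, extD (th1 φ) p u v =
        wedge (th1 φ) (conn φ) p u v + wedge ThetaC (tau1 φ) p u v) ∧
      (∀ p u : H1, conn φ p u + (starRingEnd ℂ) (conn φ p u) = 0) ∧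
      (∀ p u v : H1,
        wedge (fun q w => (starRingEnd ℂ) (tau1 φ q w)) (th1 φ) p u v = 0) := by
  have hdφ' : Differentiable ℝ φ := hφ.differentiable (by simp)
  have hdc : ∀ p, DifferentiableAt ℝ (cconj φ) p := fun p =>
    (Complex.conjCLE.hasFDerivAt.comp p (hdφ' p).hasFDerivAt).differentiableAt
  have hdi : ∀ p, DifferentiableAt ℝ (invOneSub φ) p := fun p =>
    (hInv hφ hlt p).differentiableAt
  have hc1 : ∀ p, (starRingEnd ℂ) (Z1 φ p) = Z1b (cconj φ) p := fun p =>
    conj_Z1 φ (hdφ' p)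
  have hc2 : ∀ p, (starRingEnd ℂ) (Z1b (cconj φ) p) = Z1 φ p := fun p => by
    rw [conj_Z1b (cconj φ) (hdc p), cconj_cconj]
  have hc3 : ∀ p, (starRingEnd ℂ) (Z1 (invOneSub φ) p) = Z1b (invOneSub φ) p := fun p => by
    rw [conj_Z1 (invOneSub φ) (hdi p), cconj_invOneSub]
  have hc4 : ∀ p, (starRingEnd ℂ) (Z1b (invOneSub φ) p) = Z1 (invOneSub φ) p := fun p => by
    rw [conj_Z1b (invOneSub φ) (hdi p), cconj_invOneSub]
  have hc5 : ∀ p, (starRingEnd ℂ) (Tder φ p) = Tder (cconj φ) p := fun p =>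
    conj_Tder φ (hdφ' p)
  have hcs : ∀ p, (starRingEnd ℂ) (invOneSub φ p) = invOneSub φ p := fun p => by
    simp [invOneSub, Complex.conj_ofReal]
  have hn : ∀ p, ((‖φ p‖ ^ 2 : ℝ) : ℂ) = φ p * (starRingEnd ℂ) (φ p) := fun p =>
    normsq_cast _
  have h0 : ∀ p, (1 : ℂ) - φ p * (starRingEnd ℂ) (φ p) ≠ 0 := by
    intro p
    rw [← hn p]
    have : ((1 - ‖φ p‖ ^ 2 : ℝ) : ℂ) ≠ 0 := by
      exact_mod_cast (gpos hlt p).ne'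
    push_cast at this ⊢
    convert this using 1
  have hsval : ∀ p, invOneSub φ p = ((1 : ℂ) - φ p * (starRingEnd ℂ) (φ p))⁻¹ := by
    intro p
    rw [invOneSub, ← hn p]
    push_cast
    norm_num
  -- the key analytic identity
  have key : ∀ p u, (2 : ℂ) * ((fderiv ℝ (fun q => Real.log (Ff φ q)) p u : ℝ) : ℂ) =
      invOneSub φ p * ((starRingEnd ℂ) (φ p) * Tder φ p + φ p * Tder (cconj φ) p) *
          ThetaC p u +
        (1 - φ p * (starRingEnd ℂ) (φ p)) *
          (Z1 (invOneSub φ) p * th01 p u + Z1b (invOneSub φ) p * th01b p u) := by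
    intro p u
    have hco := coframe (invOneSub φ) p u
    have hDU := DInv_eq hφ hlt p u
    have hT : Tder (invOneSub φ) p =
        -(invOneSub φ p) ^ 2 * ((DG φ p (Tvec p) : ℝ) : ℂ) := DInv_eq hφ hlt p (Tvec p)
    have hDlog := Dlog_cast hφ hlt p u
    have hDGu := DG_cast (φ := φ) p u
    have hDGT := DG_cast (φ := φ) p (Tvec p)
    have hTder : fderiv ℝ φ p (Tvec p) = Tder φ p := rfl
    rw [hTder] at hDGT
    rw [hc5 p] at hDGT
    have hs1 : invOneSub φ p * (1 - φ p * (starRingEnd ℂ) (φ p)) = 1 := by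
      rw [hsval p]
      exact inv_mul_cancel₀ (h0 p)
    linear_combination 2 * hDlog + (1 - φ p * (starRingEnd ℂ) (φ p)) * hco -
      (1 - φ p * (starRingEnd ℂ) (φ p)) * hDU +
      (1 - φ p * (starRingEnd ℂ) (φ p)) * ThetaC p u * hT -
      (1 - φ p * (starRingEnd ℂ) (φ p)) * ThetaC p u * (invOneSub φ p) ^ 2 * hDGT +
      invOneSub φ p * (((DG φ p u : ℝ) : ℂ) +
        ((starRingEnd ℂ) (φ p) * Tder φ p + φ p * Tder (cconj φ) p) * ThetaC p u) * hs1
  refine ⟨?_, ?_, ?_⟩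
  · -- structure equation (i)
    intro p u v
    rw [extD, fderiv_th1 hφ hlt p u v, fderiv_th1 hφ hlt p v u, DF_eq hφ hlt p u,
      DF_eq hφ hlt p v, coframe φ p u, coframe φ p v]
    simp only [wedge, conn, connC1, connC2, tau1, A11b, th1, th1bar]
    simp only [hn p, hsval p]
    push_cast
    field_simp [h0 p]
    ring
  · -- structure equation (ii)
    intro p u
    simp only [conn, connC1, connC2, map_add, map_sub, map_mul, map_neg,
      Complex.conj_ofReal, conj_th01, conj_th01b, conj_ThetaC, Complex.conj_conj,
      hc1 p, hc2 p, hc3 p, hc4 p, hc5 p, hcs p]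
    linear_combination (-1 : ℂ) * key p u -
      (Z1 (invOneSub φ) p * th01 p u + Z1b (invOneSub φ) p * th01b p u) * hn p
  · -- structure equation (iii)
    intro p u v
    have hconj : ∀ w, (starRingEnd ℂ) (tau1 φ p w) =
        (starRingEnd ℂ) (A11b φ p) * th1 φ p w := by
      intro w
      simp only [tau1, map_mul, th1bar, th1, map_sub, Complex.conj_ofReal, conj_th01b,
        conj_th01, Complex.conj_conj]
    rw [wedge, hconj u, hconj v]
    ring
end
end

section
/- Let φ : ℝ³ → ℂ be smooth with |φ(p)| < 1 for all p, let θ¹, θ^{1̄}, θ₁¹ be the explicit coframe and connection form built from φ, and define the Tanaka–Webster scalar curvature function R^{φ,Θ} : ℝ³ → ℂ by R^{φ,Θ} = −Z̊_{1̄}[ (φ̄_{1̄} + φ̄φ₁)/(1−|φ|²) + φ̄·Z̊_{1̄}((1−|φ|²)^{−1}) + Z̊₁((1−|φ|²)^{−1}) ] − Z̊₁[ (φ₁ + φφ̄_{1̄})/(1−|φ|²) + |φ|²·Z̊_{1̄}((1−|φ|²)^{−1}) + φ·Z̊₁((1−|φ|²)^{−1}) ] + i φ̄φ₀/(1−|φ|²).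 Then for every p ∈ ℝ³ and all vectors u, v in the kernel of Θ_p, one has dθ₁¹|_p(u,v) = R^{φ,Θ}(p) · (θ¹ ∧ θ^{1̄})_p(u,v); that is, dθ₁¹ = R^{φ,Θ} θ¹ ∧ θ^{1̄} mod Θ. (The Tanaka–Webster curvature formula of Proposition 3.2 of the paper.) -/
noncomputable section

open Complex

/-- The Tanaka–Webster scalar curvature `R^{φ,Θ}` of `(J_φ, Θ)`, as an explicit function. -/
def Rcurv (φ : H1 → ℂ) (p : H1) : ℂ :=
  -Z1b (connC1 φ) p - Z1 (connC2 φ) p +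
    Complex.I * (starRingEnd ℂ) (φ p) * Tder φ p * invOneSub φ p

section helpers
variable {φ : H1 → ℂ}

lemma contDiff_ee1 : ContDiff ℝ (⊤ : ℕ∞) ee1 := by unfold ee1; fun_prop
lemma contDiff_ee2 : ContDiff ℝ (⊤ : ℕ∞) ee2 := by unfold ee2; fun_prop
lemma contDiff_Tvec : ContDiff ℝ (⊤ : ℕ∞) Tvec := by unfold Tvec; fun_prop

lemma contDiff_sf (hφ : ContDiff ℝ (⊤ : ℕ∞) φ) : ContDiff ℝ (⊤ : ℕ∞) (fun p => 1 - ‖φ p‖ ^ 2) :=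
  contDiff_const.sub (hφ.norm_sq ℝ)

lemma s_pos (hlt : ∀ p, ‖φ p‖ < 1) (p : H1) : 0 < 1 - ‖φ p‖ ^ 2 := by
  have h := hlt p; nlinarith [norm_nonneg (φ p)]

lemma contDiff_invOneSub (hφ : ContDiff ℝ (⊤ : ℕ∞) φ) (hlt : ∀ p, ‖φ p‖ < 1) :
    ContDiff ℝ (⊤ : ℕ∞) (invOneSub φ) :=
  Complex.ofRealCLM.contDiff.comp ((contDiff_sf hφ).inv fun p => (s_pos hlt p).ne')

lemma contDiff_cconj (hφ : ContDiff ℝ (⊤ : ℕ∞) φ) : ContDiff ℝ (⊤ : ℕ∞) (cconj φ) :=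
  Complex.conjLIE.toContinuousLinearEquiv.toContinuousLinearMap.contDiff.comp hφ

lemma contDiff_Z1 {f : H1 → ℂ} (hf : ContDiff ℝ (⊤ : ℕ∞) f) : ContDiff ℝ (⊤ : ℕ∞) (Z1 f) := by
  unfold Z1
  have h1 : ContDiff ℝ (⊤ : ℕ∞) (fun p => fderiv ℝ f p (ee1 p)) :=
    (hf.fderiv_right (by simp)).clm_apply contDiff_ee1
  have h2 : ContDiff ℝ (⊤ : ℕ∞) (fun p => fderiv ℝ f p (ee2 p)) :=
    (hf.fderiv_right (by simp)).clm_apply contDiff_ee2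
  exact contDiff_const.mul (h1.sub (contDiff_const.mul h2))

lemma contDiff_Z1b {f : H1 → ℂ} (hf : ContDiff ℝ (⊤ : ℕ∞) f) : ContDiff ℝ (⊤ : ℕ∞) (Z1b f) := by
  unfold Z1b
  have h1 : ContDiff ℝ (⊤ : ℕ∞) (fun p => fderiv ℝ f p (ee1 p)) :=
    (hf.fderiv_right (by simp)).clm_apply contDiff_ee1
  have h2 : ContDiff ℝ (⊤ : ℕ∞) (fun p => fderiv ℝ f p (ee2 p)) :=
    (hf.fderiv_right (by simp)).clm_apply contDiff_ee2
  exact contDiff_const.mul (h1.add (contDiff_const.mul h2))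

lemma contDiff_Tder {f : H1 → ℂ} (hf : ContDiff ℝ (⊤ : ℕ∞) f) : ContDiff ℝ (⊤ : ℕ∞) (Tder f) := by
  unfold Tder; exact (hf.fderiv_right (by simp)).clm_apply contDiff_Tvec

lemma contDiff_logFf (hφ : ContDiff ℝ (⊤ : ℕ∞) φ) (hlt : ∀ p, ‖φ p‖ < 1) :
    ContDiff ℝ (⊤ : ℕ∞) (fun q => Real.log (Ff φ q)) := by
  have hsqrt : ContDiff ℝ (⊤ : ℕ∞) (fun q => Real.sqrt (1 - ‖φ q‖ ^ 2)) := by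
    rw [contDiff_iff_contDiffAt]
    intro q
    exact (contDiff_sf hφ).contDiffAt.sqrt (s_pos hlt q).ne'
  have hFf : ContDiff ℝ (⊤ : ℕ∞) (Ff φ) :=
    hsqrt.inv fun q => (Real.sqrt_pos.2 (s_pos hlt q)).ne'
  exact hFf.log fun q => (inv_pos.2 (Real.sqrt_pos.2 (s_pos hlt q))).ne'

lemma contDiff_connC1 (hφ : ContDiff ℝ (⊤ : ℕ∞) φ) (hlt : ∀ p, ‖φ p‖ < 1) :
    ContDiff ℝ (⊤ : ℕ∞) (connC1 φ) := by
  unfold connC1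
  have hinv := contDiff_invOneSub hφ hlt
  have hcj := contDiff_cconj hφ
  exact ((((contDiff_Z1b hcj).add (hcj.mul (contDiff_Z1 hφ))).mul hinv).add
    (hcj.mul (contDiff_Z1b hinv))).add (contDiff_Z1 hinv)

lemma contDiff_connC2 (hφ : ContDiff ℝ (⊤ : ℕ∞) φ) (hlt : ∀ p, ‖φ p‖ < 1) :
    ContDiff ℝ (⊤ : ℕ∞) (connC2 φ) := by
  unfold connC2
  have hinv := contDiff_invOneSub hφ hlt
  have hcj := contDiff_cconj hφ
  have hnsq : ContDiff ℝ (⊤ : ℕ∞) (fun p => ((‖φ p‖ ^ 2 : ℝ) : ℂ)) :=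
    Complex.ofRealCLM.contDiff.comp (hφ.norm_sq ℝ)
  exact ((((contDiff_Z1 hφ).add (hφ.mul (contDiff_Z1b hcj))).mul hinv).add
    (hnsq.mul (contDiff_Z1b hinv))).add (hφ.mul (contDiff_Z1 hinv))

lemma contDiff_c0 (hφ : ContDiff ℝ (⊤ : ℕ∞) φ) (hlt : ∀ p, ‖φ p‖ < 1) :
    ContDiff ℝ (⊤ : ℕ∞) (fun p => (starRingEnd ℂ) (φ p) * Tder φ p * invOneSub φ p) :=
  ((contDiff_cconj hφ).mul (contDiff_Tder hφ)).mul (contDiff_invOneSub hφ hlt)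

lemma fderiv_ker_decomp (f : H1 → ℂ) (p u : H1) (hu : Theta p u = 0) :
    fderiv ℝ f p u = th01 p u * Z1 f p + th01b p u * Z1b f p := by
  have hu3 : u.2.2 = p.2.1 * u.1 - p.1 * u.2.1 := by unfold Theta at hu; linarith
  have hdecomp : u = u.1 • ee1 p + u.2.1 • ee2 p := by
    refine Prod.ext ?_ (Prod.ext ?_ ?_) <;>
      simp [ee1, ee2, hu3, Prod.smul_def] <;> ring
  rw [hdecomp, map_add, map_smul, map_smul]
  unfold Z1 Z1b th01 th01b
  rw [← hdecomp]
  simp only [Complex.real_smul]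
  linear_combination ((u.2.1 : ℂ) * (fderiv ℝ f p) (ee2 p)) * Complex.I_sq

lemma wedge_th1 (hlt : ∀ p, ‖φ p‖ < 1) (p u v : H1) :
    wedge (th1 φ) (th1bar φ) p u v = wedge th01 th01b p u v := by
  have hs : 0 < 1 - ‖φ p‖ ^ 2 := s_pos hlt p
  have hF2 : ((Ff φ p : ℝ) : ℂ) * ((Ff φ p : ℝ) : ℂ) = (((1 - ‖φ p‖ ^ 2)⁻¹ : ℝ) : ℂ) := by
    rw [← Complex.ofReal_mul]
    congr 1
    rw [Ff, ← mul_inv, Real.mul_self_sqrt hs.le]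
  have hmc : φ p * (starRingEnd ℂ) (φ p) = ((‖φ p‖ ^ 2 : ℝ) : ℂ) := by
    rw [Complex.mul_conj']; norm_cast
  have hone : (((1 - ‖φ p‖ ^ 2)⁻¹ : ℝ) : ℂ) * ((1 : ℂ) - ((‖φ p‖ ^ 2 : ℝ) : ℂ)) = 1 := by
    rw [show ((1:ℂ) - ((‖φ p‖ ^ 2 : ℝ) : ℂ)) = (((1 - ‖φ p‖ ^ 2 : ℝ)) : ℂ) by push_cast; ring,
      ← Complex.ofReal_mul, inv_mul_cancel₀ hs.ne']
    norm_num
  unfold wedge th1 th1bar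
  linear_combination (th01 p u * th01b p v - th01 p v * th01b p u) *
      ((1 - ((‖φ p‖^2:ℝ):ℂ)) * hF2 + hone) +
    (-((Ff φ p:ℝ):ℂ) * ((Ff φ p:ℝ):ℂ) * (th01 p u * th01b p v - th01 p v * th01b p u)) * hmc

end helpers

/-- Proposition 3.2 (curvature part): `dθ₁¹ = R^{φ,Θ} θ¹ ∧ θ^{1̄} mod Θ`, i.e. for all `p`
and all `u, v` in the kernel of `Θ_p`, `dθ₁¹|_p(u,v) = R^{φ,Θ}(p)·(θ¹ ∧ θ^{1̄})_p(u,v)`. -/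
theorem curvature_formula (φ : H1 → ℂ) (hφ : ContDiff ℝ (⊤ : ℕ∞) φ) (hlt : ∀ p, ‖φ p‖ < 1)
    (p u v : H1) (hu : Theta p u = 0) (hv : Theta p v = 0) :
    extD (conn φ) p u v = Rcurv φ p * wedge (th1 φ) (th1bar φ) p u v := by
  set g : H1 → ℝ := fun q => Real.log (Ff φ q) with hgdef
  set c0 : H1 → ℂ := fun q => (starRingEnd ℂ) (φ q) * Tder φ q * invOneSub φ q with hc0def
  have hg : ContDiff ℝ (⊤ : ℕ∞) g := contDiff_logFf hφ hlt
  have hgd : Differentiable ℝ g := hg.differentiable (by simp)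
  have hg' : Differentiable ℝ (fderiv ℝ g) := (hg.fderiv_right (m := (⊤ : ℕ∞)) (by simp)).differentiable (by simp)
  have hc0d : DifferentiableAt ℝ c0 p :=
    ((contDiff_c0 hφ hlt).differentiable (by simp)).differentiableAt
  have hC1d : DifferentiableAt ℝ (connC1 φ) p :=
    ((contDiff_connC1 hφ hlt).differentiable (by simp)).differentiableAt
  have hC2d : DifferentiableAt ℝ (connC2 φ) p :=
    ((contDiff_connC2 hφ hlt).differentiable (by simp)).differentiableAt
  -- derivative of the contact form term
  have key : ∀ w z : H1, fderiv ℝ (fun q => conn φ q w) p z =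
      -((fderiv ℝ (fderiv ℝ g) p z w : ℝ) : ℂ) +
        (fderiv ℝ c0 p z * ThetaC p w + c0 p * ((z.1 * w.2.1 - z.2.1 * w.1 : ℝ) : ℂ)) +
        fderiv ℝ (connC1 φ) p z * th01 p w - fderiv ℝ (connC2 φ) p z * th01b p w := by
    intro w z
    have h1 : HasFDerivAt (fun q => fderiv ℝ g q w)
        ((fderiv ℝ g p).comp (0 : H1 →L[ℝ] H1) + (fderiv ℝ (fderiv ℝ g) p).flip w) p :=
      (hg' p).hasFDerivAt.clm_apply (hasFDerivAt_const w p)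
    have h1C : HasFDerivAt (fun q => -((fderiv ℝ g q w : ℝ) : ℂ))
        (-(Complex.ofRealCLM.comp
          ((fderiv ℝ g p).comp (0 : H1 →L[ℝ] H1) + (fderiv ℝ (fderiv ℝ g) p).flip w))) p :=
      ((Complex.ofRealCLM.hasFDerivAt.comp p h1)).neg
    -- derivative of Theta(·, w)
    have hfst : HasFDerivAt (fun q : H1 => q.1)
        (ContinuousLinearMap.fst ℝ ℝ (ℝ × ℝ)) p :=
      (ContinuousLinearMap.fst ℝ ℝ (ℝ × ℝ)).hasFDerivAt
    have hsnd1 : HasFDerivAt (fun q : H1 => q.2.1)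
        ((ContinuousLinearMap.fst ℝ ℝ ℝ).comp (ContinuousLinearMap.snd ℝ ℝ (ℝ × ℝ))) p :=
      ((ContinuousLinearMap.fst ℝ ℝ ℝ).comp (ContinuousLinearMap.snd ℝ ℝ (ℝ × ℝ))).hasFDerivAt
    have hθ : HasFDerivAt (fun q => Theta q w)
        (0 + w.2.1 • ContinuousLinearMap.fst ℝ ℝ (ℝ × ℝ) -
          w.1 • ((ContinuousLinearMap.fst ℝ ℝ ℝ).comp (ContinuousLinearMap.snd ℝ ℝ (ℝ × ℝ)))) p := by
      have := ((hasFDerivAt_const w.2.2 p).add (hfst.mul_const w.2.1)).sub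
        (hsnd1.mul_const w.1)
      exact this
    have hθC : HasFDerivAt (fun q => ThetaC q w)
        (Complex.ofRealCLM.comp
          (0 + w.2.1 • ContinuousLinearMap.fst ℝ ℝ (ℝ × ℝ) -
            w.1 • ((ContinuousLinearMap.fst ℝ ℝ ℝ).comp (ContinuousLinearMap.snd ℝ ℝ (ℝ × ℝ))))) p :=
      Complex.ofRealCLM.hasFDerivAt.comp p hθ
    have hmul1 := hc0d.hasFDerivAt.mul hθC
    have hmul2 := hC1d.hasFDerivAt.mul_const ((w.1 : ℂ) + Complex.I * w.2.1)
    have hmul3 := hC2d.hasFDerivAt.mul_const ((w.1 : ℂ) - Complex.I * w.2.1)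
    have htot := ((h1C.add hmul1).add hmul2).sub hmul3
    have heq : (fun q => conn φ q w) = fun q =>
        (-((fderiv ℝ g q w : ℝ) : ℂ) + c0 q * ThetaC q w) +
          connC1 φ q * ((w.1 : ℂ) + Complex.I * w.2.1) -
          connC2 φ q * ((w.1 : ℂ) - Complex.I * w.2.1) := by
      funext q
      unfold conn th01 th01b
      rw [hgdef, hc0def]
    rw [heq]; erw [htot.fderiv]
    simp only [ContinuousLinearMap.add_apply, ContinuousLinearMap.sub_apply,
      ContinuousLinearMap.neg_apply, ContinuousLinearMap.coe_comp', Function.comp_apply,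
      ContinuousLinearMap.smul_apply, ContinuousLinearMap.zero_apply, map_zero,
      ContinuousLinearMap.flip_apply, Complex.ofRealCLM_apply, ContinuousLinearMap.coe_fst',
      ContinuousLinearMap.coe_snd', smul_eq_mul, Complex.real_smul, th01, th01b, ThetaC]
    push_cast
    ring
  have hsym : fderiv ℝ (fderiv ℝ g) p u v = fderiv ℝ (fderiv ℝ g) p v u :=
    second_derivative_symmetric (fun y => (hgd y).hasFDerivAt) (hg' p).hasFDerivAt u v
  have hTu : ThetaC p u = 0 := by rw [ThetaC, hu]; norm_num
  have hTv : ThetaC p v = 0 := by rw [ThetaC, hv]; norm_num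
  rw [extD, key v u, key u v, hsym, hTu, hTv,
    fderiv_ker_decomp (connC1 φ) p u hu, fderiv_ker_decomp (connC1 φ) p v hv,
    fderiv_ker_decomp (connC2 φ) p u hu, fderiv_ker_decomp (connC2 φ) p v hv,
    wedge_th1 hlt]
  rw [Rcurv, hc0def]
  unfold wedge th01 th01b
  push_cast
  linear_combination (2 * ((starRingEnd ℂ) (φ p) * Tder φ p * invOneSub φ p) *
    ((u.1 : ℂ) * v.2.1 - (u.2.1 : ℂ) * v.1)) * Complex.I_sq
end
end
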